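/- arXiv:2001.01847 — 8 statements merged into one kernel-verified Lean document; each statement's English description precedes it below -/
import Mathlib

section
/- Let A be an n×n strictly diagonally dominant positive real matrix. Then for every column index j, the diagonal entry of the inverse satisfies A^{-1}_{jj} > 0, and it is the largest entry of its column in absolute value: A^{-1}_{jj} ≥ |A^{-1}_{ij}| for all i. -/
open Matrix Finset Real

noncomputable def rowEntropy {n : ℕ} (A : Matrix (Fin n) (Fin n) ℝ) (i : Fin n) : ℝ :=
  -∑ k, A i k * Real.logb 2 (A i k)

noncomputable def Kvec {n : ℕ} (A : Matrix (Fin n) (Fin n) ℝ) (j : Fin n) : ℝ :=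
  ∑ i, A⁻¹ j i * rowEntropy A i

noncomputable def Kmax {n : ℕ} (A : Matrix (Fin n) (Fin n) ℝ) : ℝ := ⨆ j, Kvec A j

noncomputable def Kmin {n : ℕ} (A : Matrix (Fin n) (Fin n) ℝ) : ℝ := ⨅ j, Kvec A j

def IsPmf {n : ℕ} (p : Fin n → ℝ) : Prop := (∀ i, 0 ≤ p i) ∧ ∑ i, p i = 1

noncomputable def mutualInfo {n : ℕ} (A : Matrix (Fin n) (Fin n) ℝ) (p : Fin n → ℝ) : ℝ :=
  -(∑ j, Aᵀ.mulVec p j * Real.logb 2 (Aᵀ.mulVec p j))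
    + ∑ i, ∑ j, p i * A i j * Real.logb 2 (A i j)

noncomputable def capacity {n : ℕ} (A : Matrix (Fin n) (Fin n) ℝ) : ℝ :=
  sSup {x : ℝ | ∃ p : Fin n → ℝ, IsPmf p ∧ mutualInfo A p = x}

noncomputable def qStar {n : ℕ} (A : Matrix (Fin n) (Fin n) ℝ) (j : Fin n) : ℝ :=
  (2 : ℝ) ^ (-Kvec A j) / ∑ i, (2 : ℝ) ^ (-Kvec A i)

noncomputable def pStar {n : ℕ} (A : Matrix (Fin n) (Fin n) ℝ) : Fin n → ℝ :=
  (A⁻¹)ᵀ.mulVec (qStar A)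

noncomputable def Ubound {n : ℕ} (A : Matrix (Fin n) (Fin n) ℝ) : ℝ :=
  -(∑ j, qStar A j * Real.logb 2 (qStar A j))
    + ∑ i, ∑ j, pStar A i * A i j * Real.logb 2 (A i j)

noncomputable def cmin {n : ℕ} (A : Matrix (Fin n) (Fin n) ℝ) : ℝ :=
  ⨅ i, A i i / ∑ j ∈ Finset.univ.erase i, |A i j|

noncomputable def Hmax {n : ℕ} (A : Matrix (Fin n) (Fin n) ℝ) : ℝ := ⨆ i, rowEntropy A i

noncomputable def sigmaMin {n : ℕ} (A : Matrix (Fin n) (Fin n) ℝ) : ℝ :=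
  Real.sqrt (⨅ i, (Matrix.isHermitian_conjTranspose_mul_self A).eigenvalues i)

def RowStochastic {n : ℕ} (A : Matrix (Fin n) (Fin n) ℝ) : Prop :=
  (∀ i j, 0 ≤ A i j) ∧ ∀ i, ∑ j, A i j = 1

def SDDPos {n : ℕ} (A : Matrix (Fin n) (Fin n) ℝ) : Prop :=
  (∀ i j, 0 < A i j) ∧ ∀ i, ∑ j ∈ Finset.univ.erase i, A i j < A i i

/-!
Column `j` of `A⁻¹` is the solution `x` of `A x = e_j`. Strict diagonal dominance gives a
maximum principle: at a coordinate `i` where `|x i|` is maximal,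
`|(A x) i| ≥ (|A i i| - ∑_{k ≠ i} |A i k|) |x i|`. Since `(A x) i = 0` for `i ≠ j`, the maximum of
`|x|` is attained at `j`, and then `(A x) j = 1 > 0` with a positive dominant diagonal entry forces
`x j > 0`.
-/

namespace Matrix

variable {ι 𝕜 : Type*} [Fintype ι] [DecidableEq ι]

theorem mulVec_apply_eq_diag_add_sum_erase [NonUnitalNonAssocSemiring 𝕜] (A : Matrix ι ι 𝕜)
    (x : ι → 𝕜) (i : ι) :
    (A *ᵥ x) i = A i i * x i + ∑ k ∈ univ.erase i, A i k * x k := by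
  rw [mulVec, dotProduct, ← Finset.add_sum_erase _ _ (mem_univ i)]

theorem norm_sum_erase_mul_le [SeminormedRing 𝕜] (A : Matrix ι ι 𝕜) {x : ι → 𝕜} {i : ι}
    (hx : ∀ k, ‖x k‖ ≤ ‖x i‖) :
    ‖∑ k ∈ univ.erase i, A i k * x k‖ ≤ (∑ k ∈ univ.erase i, ‖A i k‖) * ‖x i‖ := by
  rw [Finset.sum_mul]
  refine (norm_sum_le _ _).trans (Finset.sum_le_sum fun k _ => ?_)
  exact (norm_mul_le _ _).trans (mul_le_mul_of_nonneg_left (hx k) (norm_nonneg _))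

theorem sub_sum_erase_mul_norm_le_norm_mulVec_apply [NormedDivisionRing 𝕜] (A : Matrix ι ι 𝕜)
    {x : ι → 𝕜} {i : ι} (hx : ∀ k, ‖x k‖ ≤ ‖x i‖) :
    (‖A i i‖ - ∑ k ∈ univ.erase i, ‖A i k‖) * ‖x i‖ ≤ ‖(A *ᵥ x) i‖ := by
  have hdiag : A i i * x i = (A *ᵥ x) i - ∑ k ∈ univ.erase i, A i k * x k := by
    rw [mulVec_apply_eq_diag_add_sum_erase, add_sub_cancel_right]
  have := calc ‖A i i‖ * ‖x i‖
      = ‖(A *ᵥ x) i - ∑ k ∈ univ.erase i, A i k * x k‖ := by rw [← norm_mul, hdiag]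
    _ ≤ ‖(A *ᵥ x) i‖ + ‖∑ k ∈ univ.erase i, A i k * x k‖ := norm_sub_le _ _
    _ ≤ ‖(A *ᵥ x) i‖ + (∑ k ∈ univ.erase i, ‖A i k‖) * ‖x i‖ :=
        add_le_add_right (norm_sum_erase_mul_le A hx) _
  linarith

theorem norm_le_of_mulVec_apply_eq_zero [NormedDivisionRing 𝕜] {A : Matrix ι ι 𝕜}
    (hA : ∀ i, ∑ k ∈ univ.erase i, ‖A i k‖ < ‖A i i‖) {x : ι → 𝕜} {j : ι}
    (hx : ∀ i, i ≠ j → (A *ᵥ x) i = 0) (i : ι) : ‖x i‖ ≤ ‖x j‖ := by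
  have : Nonempty ι := ⟨j⟩
  obtain ⟨m, hm⟩ := Finite.exists_max fun k => ‖x k‖
  rcases eq_or_ne m j with rfl | hmj
  · exact hm i
  have hbound := sub_sum_erase_mul_norm_le_norm_mulVec_apply A hm
  rw [hx m hmj, norm_zero] at hbound
  have hxm : ‖x m‖ ≤ 0 := nonpos_of_mul_nonpos_right hbound (sub_pos.mpr (hA m))
  exact (hm i).trans (hxm.trans (norm_nonneg _))

theorem pos_of_mulVec_apply_pos {A : Matrix ι ι ℝ} {j : ι}
    (hA : ∑ k ∈ univ.erase j, |A j k| < A j j) {x : ι → ℝ} (hx : ∀ k, |x k| ≤ |x j|)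
    (hAx : 0 < (A *ᵥ x) j) : 0 < x j := by
  by_contra! hxj
  have hoff := le_of_abs_le (norm_sum_erase_mul_le A (i := j) hx)
  simp only [Real.norm_eq_abs, abs_of_nonpos hxj] at hoff
  rw [mulVec_apply_eq_diag_add_sum_erase] at hAx
  nlinarith

end Matrix

theorem SDDPos.sum_abs_erase_lt {n : ℕ} {A : Matrix (Fin n) (Fin n) ℝ} (hA : SDDPos A) (i : Fin n) :
    ∑ k ∈ univ.erase i, |A i k| < A i i := by
  simpa only [abs_of_pos (hA.1 i _)] using hA.2 i

theorem SDDPos.sum_norm_erase_lt {n : ℕ} {A : Matrix (Fin n) (Fin n) ℝ} (hA : SDDPos A)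
    (i : Fin n) : ∑ k ∈ univ.erase i, ‖A i k‖ < ‖A i i‖ := by
  simpa only [Real.norm_eq_abs, abs_of_pos (hA.1 i i)] using hA.sum_abs_erase_lt i

theorem inv_diag_pos_and_column_dominant {n : ℕ} (A : Matrix (Fin n) (Fin n) ℝ)
    (hA : SDDPos A) :
    ∀ j, 0 < A⁻¹ j j ∧ ∀ i, |A⁻¹ i j| ≤ A⁻¹ j j := by
  have hinv : A * A⁻¹ = 1 :=
    mul_nonsing_inv A (isUnit_iff_ne_zero.mpr (det_ne_zero_of_sum_row_lt_diag hA.sum_norm_erase_lt))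
  intro j
  have hcol : ∀ i, (A *ᵥ fun k => A⁻¹ k j) i = if i = j then 1 else 0 := fun i => by
    simpa only [mulVec, dotProduct, mul_apply, one_apply] using congrFun (congrFun hinv i) j
  have hmax : ∀ i, |A⁻¹ i j| ≤ |A⁻¹ j j| :=
    norm_le_of_mulVec_apply_eq_zero hA.sum_norm_erase_lt fun i hi => by simp [hcol, hi]
  have hpos : 0 < A⁻¹ j j :=
    pos_of_mulVec_apply_pos (x := fun k => A⁻¹ k j) (hA.sum_abs_erase_lt j) hmax (by simp [hcol])
  exact ⟨hpos, fun i => abs_of_pos hpos ▸ hmax i⟩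
end

section
/- Let n ≥ 2 and let A be an n×n row-stochastic strictly diagonally dominant positive real matrix. Then for every j and every k ≠ j, if A^{-1}_{kj} is a second-largest-in-absolute-value entry of column j of A^{-1} (i.e., |A^{-1}_{kj}| ≥ |A^{-1}_{ij}| for all i ≠ j), then A^{-1}_{kj} < 0. -/
open Matrix Finset Real

/-!
Let `b` be column `j` of `A⁻¹`, so `A b = e_j`. Strict diagonal dominance gives a maximum
principle: in a row `i` where `|b i|` is maximal, the diagonal term dominates the rest of
`(A b) i`. Since `(A b) i = 0` for `i ≠ j`, the maximum of `|b|` sits at `j`, and row `j` then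
forces `b j > 0`. If the runner-up `b k` were `≥ 0`, the same estimate on row `k` would make
`(A b) k ≥ A k j * b j > 0`, contradicting `(A b) k = 0`.
-/

section DiagonallyDominant

variable {ι : Type*} [DecidableEq ι] {A : Matrix ι ι ℝ} {b : ι → ℝ}

theorem le_sum_insert_mul_of_abs_le {i : ι} {s : Finset ι} (hi : i ∉ s)
    (hb : ∀ l ∈ s, |b l| ≤ b i) :
    (A i i - ∑ l ∈ s, |A i l|) * b i ≤ ∑ l ∈ insert i s, A i l * b l := by
  have hrest : -(∑ l ∈ s, |A i l|) * b i ≤ ∑ l ∈ s, A i l * b l := by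
    rw [neg_mul, sum_mul, ← sum_neg_distrib]
    refine sum_le_sum fun l hl => ?_
    calc -(|A i l| * b i) ≤ -(|A i l| * |b l|) := by gcongr; exact hb l hl
      _ = -|A i l * b l| := by rw [abs_mul]
      _ ≤ A i l * b l := neg_abs_le _
  rw [sum_insert hi]
  linarith

theorem le_abs_sum_insert_mul_of_abs_le {i : ι} {s : Finset ι} (hi : i ∉ s)
    (hb : ∀ l ∈ s, |b l| ≤ |b i|) :
    (A i i - ∑ l ∈ s, |A i l|) * |b i| ≤ |∑ l ∈ insert i s, A i l * b l| := by
  rcases le_total 0 (b i) with hbi | hbi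
  · rw [abs_of_nonneg hbi] at hb ⊢
    exact (le_sum_insert_mul_of_abs_le hi hb).trans (le_abs_self _)
  · rw [abs_of_nonpos hbi] at hb ⊢
    have hnegb : ∀ l ∈ s, |(-b) l| ≤ (-b) i := fun l hl => by simpa using hb l hl
    calc (A i i - ∑ l ∈ s, |A i l|) * -b i ≤ ∑ l ∈ insert i s, A i l * (-b) l :=
          le_sum_insert_mul_of_abs_le hi hnegb
      _ = -∑ l ∈ insert i s, A i l * b l := by
          simp only [Pi.neg_apply, mul_neg, sum_neg_distrib]
      _ ≤ _ := neg_le_abs _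

variable [Fintype ι] (hdom : ∀ i, ∑ l ∈ univ.erase i, |A i l| < A i i) {j : ι}
include hdom

theorem abs_le_abs_of_mulVec_eq_single (hb : A *ᵥ b = Pi.single j 1) (i : ι) :
    |b i| ≤ |b j| := by
  have hrow : ∀ i, ∑ l, A i l * b l = (Pi.single j 1 : ι → ℝ) i := fun i => congrFun hb i
  have : Nonempty ι := ⟨j⟩
  obtain ⟨m, hm⟩ := Finite.exists_max fun l => |b l|
  suffices hmj : m = j from hmj ▸ hm i
  by_contra hmj
  have hest := le_abs_sum_insert_mul_of_abs_le (A := A) (notMem_erase m univ) fun l _ => hm l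
  rw [insert_erase (mem_univ m), hrow m, Pi.single_eq_of_ne hmj, abs_zero] at hest
  have hbm : |b m| = 0 :=
    le_antisymm (nonpos_of_mul_nonpos_right hest (sub_pos.2 (hdom m))) (abs_nonneg _)
  have hzero : ∀ l, b l = 0 := fun l => abs_nonpos_iff.1 (hbm ▸ hm l)
  simpa [hzero] using hrow j

theorem pos_of_mulVec_eq_single (hb : A *ᵥ b = Pi.single j 1) : 0 < b j := by
  by_contra! hbj
  have hmax := abs_le_abs_of_mulVec_eq_single hdom hb
  have hnegb : ∀ l ∈ univ.erase j, |(-b) l| ≤ (-b) j := fun l _ => by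
    simpa [abs_of_nonpos hbj] using hmax l
  have hest := le_sum_insert_mul_of_abs_le (A := A) (notMem_erase j univ) hnegb
  rw [insert_erase (mem_univ j)] at hest
  have hrow : ∑ l, A j l * b l = 1 := (congrFun hb j).trans (Pi.single_eq_same j 1)
  simp only [Pi.neg_apply, mul_neg, sum_neg_distrib, hrow] at hest
  have : 0 ≤ (A j j - ∑ l ∈ univ.erase j, |A j l|) * -b j :=
    mul_nonneg (sub_pos.2 (hdom j)).le (neg_nonneg.2 hbj)
  linarith

theorem neg_of_mulVec_eq_single (hb : A *ᵥ b = Pi.single j 1) {k : ι} (hkj : k ≠ j)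
    (hAkj : 0 < A k j) (hk : ∀ i, i ≠ j → |b i| ≤ |b k|) : b k < 0 := by
  by_contra! hbk
  set s := (univ.erase j).erase k
  have hest := le_sum_insert_mul_of_abs_le (A := A) (notMem_erase k (univ.erase j)) fun l hl =>
    abs_of_nonneg hbk ▸ hk l (ne_of_mem_erase (mem_of_mem_erase hl))
  have hcoef : 0 ≤ A k k - ∑ l ∈ s, |A k l| := by
    have : ∑ l ∈ s, |A k l| ≤ ∑ l ∈ univ.erase k, |A k l| :=
      sum_le_sum_of_subset_of_nonneg (fun l hl => mem_erase.2 ⟨ne_of_mem_erase hl, mem_univ l⟩)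
        fun l _ _ => abs_nonneg _
    linarith [hdom k]
  have hrow : A k j * b j + ∑ l ∈ insert k s, A k l * b l = 0 := by
    rw [insert_erase (mem_erase.2 ⟨hkj, mem_univ k⟩),
      add_sum_erase _ (fun l => A k l * b l) (mem_univ j)]
    exact (congrFun hb k).trans (Pi.single_eq_of_ne hkj 1)
  have hbj := pos_of_mulVec_eq_single hdom hb
  linarith [mul_nonneg hcoef hbk, mul_pos hAkj hbj]

end DiagonallyDominant

theorem SDDPos.sum_abs_lt_diag {n : ℕ} {A : Matrix (Fin n) (Fin n) ℝ} (hA : SDDPos A)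
    (i : Fin n) :
    ∑ l ∈ univ.erase i, |A i l| < A i i := by
  simpa only [abs_of_pos (hA.1 _ _)] using hA.2 i

theorem SDDPos.isUnit_det {n : ℕ} {A : Matrix (Fin n) (Fin n) ℝ} (hA : SDDPos A) :
    IsUnit A.det :=
  isUnit_iff_ne_zero.2 <| det_ne_zero_of_sum_row_lt_diag fun i => by
    simpa only [Real.norm_eq_abs, abs_of_pos (hA.1 i i)] using hA.sum_abs_lt_diag i

theorem mulVec_col_inv {ι R : Type*} [Fintype ι] [DecidableEq ι] [CommRing R]
    {A : Matrix ι ι R} (hA : IsUnit A.det) (j : ι) : A *ᵥ A⁻¹.col j = Pi.single j 1 := by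
  rw [← mulVec_single_one, mulVec_mulVec, mul_nonsing_inv A hA, one_mulVec]

theorem second_largest_abs_entry_neg_general {n : ℕ} (A : Matrix (Fin n) (Fin n) ℝ)
    (hA : SDDPos A) :
    ∀ j k, k ≠ j → (∀ i, i ≠ j → |A⁻¹ i j| ≤ |A⁻¹ k j|) → A⁻¹ k j < 0 :=
  fun j k hkj hk =>
    neg_of_mulVec_eq_single hA.sum_abs_lt_diag (mulVec_col_inv hA.isUnit_det j) hkj (hA.1 k j) hk

theorem second_largest_abs_entry_neg {n : ℕ} (hn : 2 ≤ n) (A : Matrix (Fin n) (Fin n) ℝ)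
    (hst : RowStochastic A) (hA : SDDPos A) :
    ∀ j k, k ≠ j → (∀ i, i ≠ j → |A⁻¹ i j| ≤ |A⁻¹ k j|) → A⁻¹ k j < 0 :=
  second_largest_abs_entry_neg_general A hA
end

section
/- Let n ≥ 2 and let A be an n×n row-stochastic strictly diagonally dominant positive real matrix. Then for every j and every k ≠ j, |A^{-1}_{kj}| · (c_min(A) − 1) ≤ A^{-1}_{jj}. -/
/-!
Let `x` be the `j`-th column of `A⁻¹`, so `A x = e_j`. Comparing, in a row `i`, the diagonal term
`A i i * x i` with the rest of the row, bounded by `R_i * max |x|`, shows three things in turn: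
`|x|` is maximal at `j` (at a maximum `i ≠ j` the row would force `A i i ≤ R_i`), `x j > 0`, and
`A k k * |x k| ≤ R_k * x j` for `k ≠ j`. The last one is `|x k| * c_k ≤ x j`, and `c_min ≤ c_k`.
-/

open Matrix Finset Real

namespace Matrix

variable {ι α : Type*} [Fintype ι] [DecidableEq ι]

section OrderedRing

variable [Ring α] [LinearOrder α] [IsStrictOrderedRing α]

def gershgorinRadius (A : Matrix ι ι α) (i : ι) : α := ∑ l ∈ univ.erase i, |A i l|

lemma gershgorinRadius_nonneg (A : Matrix ι ι α) (i : ι) : 0 ≤ gershgorinRadius A i :=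
  sum_nonneg fun _ _ => abs_nonneg _

lemma abs_mulVec_apply_sub_diag_mul_le (A : Matrix ι ι α) {x : ι → α} {M : α}
    (hx : ∀ l, |x l| ≤ M) (i : ι) :
    |(A *ᵥ x) i - A i i * x i| ≤ gershgorinRadius A i * M := by
  have hrow : (A *ᵥ x) i - A i i * x i = ∑ l ∈ univ.erase i, A i l * x l := by
    rw [mulVec, dotProduct, ← add_sum_erase _ _ (mem_univ i), add_sub_cancel_left]
  rw [hrow, gershgorinRadius, sum_mul]
  refine (abs_sum_le_sum_abs _ _).trans (sum_le_sum fun l _ => ?_)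
  rw [abs_mul]
  exact mul_le_mul_of_nonneg_left (hx l) (abs_nonneg _)

lemma abs_diag_mul_abs_le_of_mulVec_apply_eq_zero (A : Matrix ι ι α) {x : ι → α} {M : α}
    (hx : ∀ l, |x l| ≤ M) {i : ι} (hi : (A *ᵥ x) i = 0) :
    |A i i| * |x i| ≤ gershgorinRadius A i * M := by
  simpa [hi, abs_mul] using abs_mulVec_apply_sub_diag_mul_le A hx i

variable {A : Matrix ι ι α} {x : ι → α} {j : ι}

lemma abs_le_abs_of_mulVec_eq_single (hA : ∀ i, gershgorinRadius A i < A i i)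
    (hx : A *ᵥ x = Pi.single j 1) (i : ι) : |x i| ≤ |x j| := by
  obtain ⟨i₀, -, hmax⟩ := exists_max_image univ (fun l => |x l|) ⟨j, mem_univ j⟩
  suffices |x i₀| ≤ |x j| from (hmax i (mem_univ i)).trans this
  by_contra! hlt
  have hi₀ : (A *ᵥ x) i₀ = 0 := by
    rw [hx, Pi.single_eq_of_ne (ne_of_apply_ne (fun l => |x l|) hlt.ne')]
  have hrow := abs_diag_mul_abs_le_of_mulVec_apply_eq_zero A (fun l => hmax l (mem_univ l)) hi₀
  have hdiag : |A i₀ i₀| ≤ gershgorinRadius A i₀ :=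
    le_of_mul_le_mul_right hrow ((abs_nonneg _).trans_lt hlt)
  exact (hA i₀).not_ge (hdiag.trans' (le_abs_self _))

lemma pos_of_mulVec_eq_single (hA : ∀ i, gershgorinRadius A i < A i i)
    (hx : A *ᵥ x = Pi.single j 1) : 0 < x j := by
  have hrow := abs_mulVec_apply_sub_diag_mul_le A (abs_le_abs_of_mulVec_eq_single hA hx) j
  rw [hx, Pi.single_eq_same] at hrow
  by_contra! hnonpos
  rw [abs_of_nonpos hnonpos] at hrow
  have hdiag := mul_le_mul_of_nonneg_right (hA j).le (neg_nonneg.2 hnonpos)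
  simp only [mul_neg] at hrow hdiag
  have key := (le_abs_self _).trans (hrow.trans hdiag)
  rw [sub_le_iff_le_add, neg_add_cancel] at key
  exact zero_lt_one.not_ge key

lemma diag_mul_abs_le_of_mulVec_eq_single (hA : ∀ i, gershgorinRadius A i < A i i)
    (hx : A *ᵥ x = Pi.single j 1) {k : ι} (hkj : k ≠ j) :
    A k k * |x k| ≤ gershgorinRadius A k * x j := by
  have hbound (l : ι) : |x l| ≤ x j :=
    (abs_le_abs_of_mulVec_eq_single hA hx l).trans (abs_of_pos (pos_of_mulVec_eq_single hA hx)).le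
  have hk : (A *ᵥ x) k = 0 := by rw [hx, Pi.single_eq_of_ne hkj]
  exact (abs_diag_mul_abs_le_of_mulVec_apply_eq_zero A hbound hk).trans'
    (mul_le_mul_of_nonneg_right (le_abs_self _) (abs_nonneg _))

end OrderedRing

lemma abs_mul_div_gershgorinRadius_le [Field α] [LinearOrder α] [IsStrictOrderedRing α]
    {A : Matrix ι ι α} {x : ι → α} {j k : ι} (hA : ∀ i, gershgorinRadius A i < A i i)
    (hx : A *ᵥ x = Pi.single j 1) (hkj : k ≠ j) :
    |x k| * (A k k / gershgorinRadius A k) ≤ x j := by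
  rcases (gershgorinRadius_nonneg A k).eq_or_lt with hzero | hpos
  · -- `c_k = A k k / 0 = 0` here
    simpa [← hzero] using (pos_of_mulVec_eq_single hA hx).le
  · rw [← mul_div_assoc, div_le_iff₀ hpos, mul_comm (|x k|), mul_comm (x j)]
    exact diag_mul_abs_le_of_mulVec_eq_single hA hx hkj

end Matrix

theorem offdiag_abs_le_diag_inv_general {n : ℕ} (A : Matrix (Fin n) (Fin n) ℝ)
    (hA : SDDPos A) :
    ∀ j k, k ≠ j → |A⁻¹ k j| * (cmin A - 1) ≤ A⁻¹ j j := by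
  intro j k hkj
  obtain ⟨hpos, hsdd⟩ := hA
  have hradius (i : Fin n) : gershgorinRadius A i = ∑ l ∈ univ.erase i, A i l :=
    sum_congr rfl fun l _ => abs_of_pos (hpos i l)
  have hdom (i : Fin n) : gershgorinRadius A i < A i i := (hradius i).trans_lt (hsdd i)
  have hdet : A.det ≠ 0 := det_ne_zero_of_sum_row_lt_diag fun i => by
    simp only [Real.norm_eq_abs, abs_of_pos (hpos i i)]
    exact hdom i
  have hcol : A *ᵥ (A⁻¹ *ᵥ Pi.single j 1) = Pi.single j 1 := by
    rw [mulVec_mulVec, mul_nonsing_inv _ (isUnit_iff_ne_zero.2 hdet), one_mulVec]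
  have hcmin : cmin A ≤ A k k / gershgorinRadius A k :=
    ciInf_le (Set.finite_range _).bddBelow k
  calc |A⁻¹ k j| * (cmin A - 1) ≤ |A⁻¹ k j| * (A k k / gershgorinRadius A k) := by
        gcongr; linarith
    _ ≤ A⁻¹ j j := by
        simpa [mulVec_single_one] using abs_mul_div_gershgorinRadius_le hdom hcol hkj

theorem offdiag_abs_le_diag_inv {n : ℕ} (hn : 2 ≤ n) (A : Matrix (Fin n) (Fin n) ℝ)
    (hst : RowStochastic A) (hA : SDDPos A) :
    ∀ j k, k ≠ j → |A⁻¹ k j| * (cmin A - 1) ≤ A⁻¹ j j :=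
  offdiag_abs_le_diag_inv_general A hA
end

section
/- Let A be an n×n invertible row-stochastic real matrix with all entries strictly positive. Then the channel capacity satisfies C(A) ≤ U(A), i.e., for every probability mass vector p, I_A(p) ≤ −Σ_j q*_j log₂ q*_j + Σ_{i,j} p*_i A_{ij} log₂ A_{ij}, where q*_j = 2^{−K_j}/Σ_i 2^{−K_i} and p* = A^{−T} q*. -/
open Matrix Finset Real

/-!
Write `q = Aᵀ p` for the output distribution and `a_j = 2 ^ (-K_j)`. Since `K = A⁻¹ H`, the
conditional entropy `p ⬝ H` equals `q ⬝ K`, so `I_A(p) = H(q) - q ⬝ K = ∑ q_j log₂ (a_j / q_j)`,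
which Gibbs' inequality bounds by `log₂ ∑ a_j`. The same computation for `q*`, which is
proportional to `a`, shows that `U(A)` equals `log₂ ∑ a_j`.
-/

lemma mul_log_div_le_sub {q r : ℝ} (hq : 0 ≤ q) (hr : 0 < r) : q * log (r / q) ≤ r - q := by
  rcases hq.eq_or_lt with rfl | hq
  · simpa using hr.le
  · calc q * log (r / q) ≤ q * (r / q - 1) :=
          mul_le_mul_of_nonneg_left (log_le_sub_one_of_pos (div_pos hr hq)) hq.le
      _ = r - q := by field_simp

theorem sum_mul_log_div_le_log_sum {ι : Type*} [Fintype ι] {q a : ι → ℝ}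
    (hq : ∀ i, 0 ≤ q i) (hq1 : ∑ i, q i = 1) (ha : ∀ i, 0 < a i) :
    ∑ i, q i * log (a i / q i) ≤ log (∑ i, a i) := by
  have hne : (univ : Finset ι).Nonempty := by
    by_contra h
    simp [not_nonempty_iff_eq_empty.mp h] at hq1
  set S := ∑ i, a i
  have hS : 0 < S := sum_pos (fun i _ => ha i) hne
  have hsplit : ∀ i, q i * log (a i / q i) = q i * log (a i / S / q i) + q i * log S := by
    intro i
    rcases eq_or_ne (q i) 0 with h | h
    · simp [h]
    · rw [div_right_comm, log_div (div_ne_zero (ha i).ne' h) hS.ne']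
      ring
  calc ∑ i, q i * log (a i / q i)
      = ∑ i, q i * log (a i / S / q i) + log S := by
        rw [sum_congr rfl fun i _ => hsplit i, sum_add_distrib, ← sum_mul, hq1, one_mul]
    _ ≤ ∑ i, (a i / S - q i) + log S := by
        gcongr with i
        exact mul_log_div_le_sub (hq i) (div_pos (ha i) hS)
    _ = log S := by
        rw [sum_sub_distrib, ← sum_div, div_self hS.ne', hq1, sub_self, zero_add]

theorem sum_mul_logb_div_le_logb_sum {ι : Type*} [Fintype ι] {b : ℝ} (hb : 1 < b)
    {q a : ι → ℝ} (hq : ∀ i, 0 ≤ q i) (hq1 : ∑ i, q i = 1) (ha : ∀ i, 0 < a i) :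
    ∑ i, q i * logb b (a i / q i) ≤ logb b (∑ i, a i) := by
  simp only [logb, ← mul_div_assoc, ← sum_div]
  exact div_le_div_of_nonneg_right (sum_mul_log_div_le_log_sum hq hq1 ha) (log_pos hb).le

lemma mul_logb_two_rpow_neg_div (q K : ℝ) :
    q * logb 2 (2 ^ (-K) / q) = -(q * logb 2 q) - q * K := by
  rcases eq_or_ne q 0 with rfl | hq
  · simp
  · rw [logb_div (by positivity) hq, logb_rpow two_pos (by norm_num)]
    ring

lemma sum_mul_logb_two_rpow_neg_div {ι : Type*} [Fintype ι] (q K : ι → ℝ) :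
    ∑ j, q j * logb 2 (2 ^ (-K j) / q j) = -∑ j, q j * logb 2 (q j) - q ⬝ᵥ K := by
  simp only [mul_logb_two_rpow_neg_div, sum_sub_distrib, sum_neg_distrib, dotProduct]

lemma IsPmf.transpose_mulVec {n : ℕ} {A : Matrix (Fin n) (Fin n) ℝ} (hA : RowStochastic A)
    {p : Fin n → ℝ} (hp : IsPmf p) : IsPmf (Aᵀ *ᵥ p) := by
  refine ⟨fun j => dotProduct_nonneg_of_nonneg (fun i => hA.1 i j) hp.1, ?_⟩
  have hrows : A *ᵥ (fun _ => 1) = fun _ => 1 := funext fun i => by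
    simpa [mulVec, dotProduct] using hA.2 i
  calc ∑ j, (Aᵀ *ᵥ p) j = (p ᵥ* A) ⬝ᵥ fun _ => 1 := by simp [mulVec_transpose, dotProduct]
    _ = ∑ i, p i := by rw [← dotProduct_mulVec, hrows]; simp [dotProduct]
    _ = 1 := hp.2

lemma sum_sum_mul_logb_eq_neg_dotProduct_rowEntropy {n : ℕ} (A : Matrix (Fin n) (Fin n) ℝ)
    (p : Fin n → ℝ) :
    ∑ i, ∑ j, p i * A i j * logb 2 (A i j) = -(p ⬝ᵥ rowEntropy A) := by
  simp [dotProduct, rowEntropy, mul_sum, mul_assoc]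

lemma Kvec_eq_mulVec {n : ℕ} (A : Matrix (Fin n) (Fin n) ℝ) :
    Kvec A = A⁻¹ *ᵥ rowEntropy A := rfl

lemma transpose_mulVec_dotProduct_Kvec {n : ℕ} {A : Matrix (Fin n) (Fin n) ℝ}
    (hA : IsUnit A.det) (p : Fin n → ℝ) :
    (Aᵀ *ᵥ p) ⬝ᵥ Kvec A = p ⬝ᵥ rowEntropy A := by
  rw [Kvec_eq_mulVec, mulVec_transpose, ← dotProduct_mulVec, mulVec_mulVec,
    mul_nonsing_inv A hA, one_mulVec]

lemma pStar_dotProduct_rowEntropy {n : ℕ} (A : Matrix (Fin n) (Fin n) ℝ) :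
    pStar A ⬝ᵥ rowEntropy A = qStar A ⬝ᵥ Kvec A := by
  rw [pStar, Kvec_eq_mulVec, mulVec_transpose, dotProduct_mulVec]

lemma mutualInfo_eq_sum_mul_logb_div {n : ℕ} {A : Matrix (Fin n) (Fin n) ℝ}
    (hA : IsUnit A.det) (p : Fin n → ℝ) :
    mutualInfo A p = ∑ j, (Aᵀ *ᵥ p) j * logb 2 (2 ^ (-Kvec A j) / (Aᵀ *ᵥ p) j) := by
  rw [sum_mul_logb_two_rpow_neg_div, transpose_mulVec_dotProduct_Kvec hA, mutualInfo,
    sum_sum_mul_logb_eq_neg_dotProduct_rowEntropy, sub_eq_add_neg]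

lemma Ubound_eq_logb_sum {n : ℕ} (A : Matrix (Fin n) (Fin n) ℝ) :
    Ubound A = logb 2 (∑ j, (2 : ℝ) ^ (-Kvec A j)) := by
  set S := ∑ j, (2 : ℝ) ^ (-Kvec A j)
  have hU : Ubound A = ∑ j, qStar A j * logb 2 (2 ^ (-Kvec A j) / qStar A j) := by
    rw [sum_mul_logb_two_rpow_neg_div, ← pStar_dotProduct_rowEntropy, Ubound,
      sum_sum_mul_logb_eq_neg_dotProduct_rowEntropy, sub_eq_add_neg]
  have hq : ∀ j, 2 ^ (-Kvec A j) / qStar A j = S := fun j =>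
    div_div_cancel₀ (by positivity)
  have hsum : ∑ j, qStar A j = S / S := by simp only [qStar, ← sum_div, S]
  rw [hU, sum_congr rfl fun j _ => by rw [hq j], ← sum_mul, hsum]
  rcases eq_or_ne S 0 with hS | hS
  · simp [hS]
  · rw [div_self hS, one_mul]

lemma mutualInfo_le_Ubound {n : ℕ} {A : Matrix (Fin n) (Fin n) ℝ} (hst : RowStochastic A)
    (hinv : IsUnit A.det) {p : Fin n → ℝ} (hp : IsPmf p) : mutualInfo A p ≤ Ubound A := by
  obtain ⟨hq, hq1⟩ := hp.transpose_mulVec hst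
  rw [mutualInfo_eq_sum_mul_logb_div hinv, Ubound_eq_logb_sum]
  exact sum_mul_logb_div_le_logb_sum one_lt_two hq hq1 fun _ => by positivity

lemma isPmf_uniform {n : ℕ} [NeZero n] : IsPmf fun _ : Fin n => (n : ℝ)⁻¹ := by
  refine ⟨fun _ => by positivity, ?_⟩
  simp [NeZero.ne n]

lemma capacity_le_of_forall_isPmf {n : ℕ} [NeZero n] {A : Matrix (Fin n) (Fin n) ℝ} {c : ℝ}
    (h : ∀ p, IsPmf p → mutualInfo A p ≤ c) : capacity A ≤ c :=
  csSup_le ⟨_, _, isPmf_uniform, rfl⟩ fun _ ⟨p, hp, hx⟩ => hx ▸ h p hp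

theorem capacity_le_Ubound_general {n : ℕ} (A : Matrix (Fin n) (Fin n) ℝ)
    (hst : RowStochastic A) (hinv : IsUnit A.det) :
    capacity A ≤ Ubound A ∧
      ∀ p : Fin n → ℝ, IsPmf p → mutualInfo A p ≤ Ubound A := by
  have hI : ∀ p : Fin n → ℝ, IsPmf p → mutualInfo A p ≤ Ubound A :=
    fun _ hp => mutualInfo_le_Ubound hst hinv hp
  refine ⟨?_, hI⟩
  rcases n.eq_zero_or_pos with rfl | hn
  · simp [capacity, Ubound, IsPmf]
  · have : NeZero n := ⟨hn.ne'⟩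
    exact capacity_le_of_forall_isPmf hI

theorem capacity_le_Ubound {n : ℕ} (A : Matrix (Fin n) (Fin n) ℝ)
    (hst : RowStochastic A) (hpos : ∀ i j, 0 < A i j) (hinv : IsUnit A.det) :
    capacity A ≤ Ubound A ∧
      ∀ p : Fin n → ℝ, IsPmf p → mutualInfo A p ≤ Ubound A :=
  capacity_le_Ubound_general A hst hinv
end

section
/- Let n ≥ 2 and let A be an n×n row-stochastic strictly diagonally dominant positive real matrix. If c_i(A^{-T}) ≥ (n−1)·2^{K_max − K_min} for every i, then the vector p* = A^{−T} q* has all entries nonnegative, where q*_j = 2^{−K_j}/Σ_i 2^{−K_i}. -/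
open Matrix Finset Real

/-! Every entry of `q*` lies within the factor `r = 2^(K_max - K_min)` of every other, so
`p*_i = Σ_j A⁻¹_{ji} q*_j ≥ q*_i (A⁻¹_{ii} - r Σ_{j ≠ i} |A⁻¹_{ji}|)`, and the Gershgorin
condition on column `i` of `A⁻¹` makes the bracket nonnegative. -/

theorem sum_mul_nonneg_of_dominant {ι : Type*} [Fintype ι] [DecidableEq ι] {b q : ι → ℝ}
    {i : ι} {r : ℝ} (hq : ∀ j, 0 ≤ q j) (hqr : ∀ j, q j ≤ r * q i)
    (hb : r * ∑ j ∈ univ.erase i, |b j| ≤ b i) : 0 ≤ ∑ j, b j * q j := by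
  have hoff : -(r * q i * ∑ j ∈ univ.erase i, |b j|) ≤ ∑ j ∈ univ.erase i, b j * q j := by
    rw [mul_sum, ← sum_neg_distrib]
    refine sum_le_sum fun j _ => ?_
    nlinarith [neg_abs_le (b j), abs_nonneg (b j), hq j, hqr j]
  have hdiag : r * q i * ∑ j ∈ univ.erase i, |b j| ≤ b i * q i := by
    nlinarith [mul_le_mul_of_nonneg_right hb (hq i)]
  rw [← add_sum_erase _ _ (mem_univ i)]
  linarith

theorem mul_le_of_one_le_of_mul_le_div {c r s y : ℝ} (hc : 1 ≤ c) (hr : 0 < r) (hs : 0 ≤ s)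
    (h : c * r ≤ y / s) : r * s ≤ y := by
  rcases hs.eq_or_lt with rfl | hs
  · rw [div_zero] at h
    nlinarith
  · calc r * s ≤ c * r * s := by nlinarith [mul_pos hr hs]
      _ ≤ y := (le_div_iff₀ hs).mp h

section
variable {n : ℕ} (A : Matrix (Fin n) (Fin n) ℝ)

theorem Kmin_le_Kvec (j : Fin n) : Kmin A ≤ Kvec A j :=
  ciInf_le (Set.finite_range _).bddBelow j

theorem Kvec_le_Kmax (j : Fin n) : Kvec A j ≤ Kmax A :=
  le_ciSup (Set.finite_range _).bddAbove j

theorem qStar_nonneg (j : Fin n) : 0 ≤ qStar A j := by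
  unfold qStar
  positivity

theorem qStar_le_rpow_mul_qStar (i j : Fin n) :
    qStar A j ≤ (2 : ℝ) ^ (Kmax A - Kmin A) * qStar A i := by
  unfold qStar
  rw [mul_div_assoc', ← rpow_add two_pos]
  gcongr
  · norm_num
  · linarith [Kmin_le_Kvec A j, Kvec_le_Kmax A i]

theorem pStar_apply (i : Fin n) : pStar A i = ∑ j, A⁻¹ j i * qStar A j := by
  simp only [pStar, mulVec, dotProduct, transpose_apply]

end

theorem pStar_nonneg_of_gershgorin_cond_general {n : ℕ} (hn : 2 ≤ n)
    (A : Matrix (Fin n) (Fin n) ℝ)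
    (hc : ∀ i, ((n : ℝ) - 1) * (2 : ℝ) ^ (Kmax A - Kmin A) ≤
        A⁻¹ i i / ∑ j ∈ Finset.univ.erase i, |A⁻¹ j i|) :
    ∀ i, 0 ≤ pStar A i := by
  intro i
  have hn1 : (1 : ℝ) ≤ (n : ℝ) - 1 := by
    have : (2 : ℝ) ≤ n := by exact_mod_cast hn
    linarith
  rw [pStar_apply]
  refine sum_mul_nonneg_of_dominant (qStar_nonneg A) (fun j => qStar_le_rpow_mul_qStar A i j) ?_
  exact mul_le_of_one_le_of_mul_le_div hn1 (by positivity)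
    (sum_nonneg fun j _ => abs_nonneg _) (hc i)

theorem pStar_nonneg_of_gershgorin_cond {n : ℕ} (hn : 2 ≤ n)
    (A : Matrix (Fin n) (Fin n) ℝ) (hst : RowStochastic A) (hA : SDDPos A)
    (hc : ∀ i, ((n : ℝ) - 1) * (2 : ℝ) ^ (Kmax A - Kmin A) ≤
        A⁻¹ i i / ∑ j ∈ Finset.univ.erase i, |A⁻¹ j i|) :
    ∀ i, 0 ≤ pStar A i :=
  pStar_nonneg_of_gershgorin_cond_general hn A hc
end

section
/- Let n ≥ 2 and let A be an n×n row-stochastic strictly diagonally dominant positive real matrix. Then K_max − K_min ≤ n · H_max(A) · V / σ_min(A), where V = c_min(A)/(c_min(A) − 1). -/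
open Matrix Finset Real

/-!
Here `K = A⁻¹ h` for the vector of row entropies `h i ∈ [0, H_max]`. Since `A 1 = 1`
forces `A⁻¹ 1 = 1`, shifting `h` by the constant `H_max / 2` shifts every `K j` by the same
constant, so `K_max - K_min` is at most twice the sup norm of `A⁻¹ g` for the centred vector
`g = h - H_max / 2`. That is bounded by `‖A⁻¹ g‖₂ ≤ ‖g‖₂ / σ_min ≤ √n H_max / (2 σ_min)`.
Finally `√n ≤ n`, and `V ≥ 1` because strict diagonal dominance gives `c_min > 1`.
-/

theorem ciSup_sub_ciInf_le {ι : Type*} [Finite ι] [Nonempty ι] (f : ι → ℝ) {C : ℝ}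
    (h : ∀ j k, f j - f k ≤ C) : (⨆ i, f i) - ⨅ i, f i ≤ C := by
  obtain ⟨j, hj⟩ := exists_eq_ciSup_of_finite (f := f)
  obtain ⟨k, hk⟩ := exists_eq_ciInf_of_finite (f := f)
  rw [← hj, ← hk]
  exact h j k

namespace Matrix

variable {ι : Type*} [Fintype ι] [DecidableEq ι]

theorem IsHermitian.iInf_eigenvalues_mul_dotProduct_self_le {M : Matrix ι ι ℝ}
    (hM : M.IsHermitian) (x : ι → ℝ) :
    (⨅ i, hM.eigenvalues i) * (x ⬝ᵥ x) ≤ x ⬝ᵥ (M *ᵥ x) := by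
  set U : Matrix ι ι ℝ := (hM.eigenvectorUnitary : Matrix ι ι ℝ)
  have hUU : U * Uᵀ = 1 := (mem_unitaryGroup_iff).mp hM.eigenvectorUnitary.2
  -- coordinates of `x` in the orthonormal eigenbasis
  set y : ι → ℝ := Uᵀ *ᵥ x
  have hxU : x ᵥ* U = y := (mulVec_transpose U x).symm
  have hnorm : x ⬝ᵥ x = ∑ j, y j ^ 2 := by
    rw [← congrArg (x ⬝ᵥ ·) (one_mulVec x), ← hUU, ← mulVec_mulVec, dotProduct_mulVec, hxU]
    simp only [dotProduct, sq]
    rfl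
  have hquad : x ⬝ᵥ (M *ᵥ x) = ∑ j, hM.eigenvalues j * y j ^ 2 := by
    conv_lhs => rw [hM.spectral_theorem, Unitary.conjStarAlgAut_apply]
    have hdiag : diagonal (RCLike.ofReal ∘ hM.eigenvalues) = diagonal hM.eigenvalues := rfl
    rw [hdiag, star_eq_conjTranspose, conjTranspose_eq_transpose_of_trivial, ← mulVec_mulVec,
      dotProduct_mulVec, ← vecMul_vecMul, hxU]
    simp only [dotProduct, vecMul_diagonal]
    exact Finset.sum_congr rfl fun j _ => by ring
  rw [hnorm, hquad, Finset.mul_sum]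
  exact Finset.sum_le_sum fun j _ =>
    mul_le_mul_of_nonneg_right (ciInf_le (Set.finite_range _).bddBelow j) (sq_nonneg _)

end Matrix

section SingularValue

variable {n : ℕ} {A : Matrix (Fin n) (Fin n) ℝ}

theorem sigmaMin_sq_mul_dotProduct_self_le (A : Matrix (Fin n) (Fin n) ℝ) (x : Fin n → ℝ) :
    sigmaMin A ^ 2 * (x ⬝ᵥ x) ≤ (A *ᵥ x) ⬝ᵥ (A *ᵥ x) := by
  have hAHA := isHermitian_conjTranspose_mul_self A
  rw [sigmaMin, sq_sqrt (Real.iInf_nonneg (eigenvalues_conjTranspose_mul_self_nonneg A))]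
  calc (⨅ i, hAHA.eigenvalues i) * (x ⬝ᵥ x) ≤ x ⬝ᵥ ((Aᴴ * A) *ᵥ x) :=
        hAHA.iInf_eigenvalues_mul_dotProduct_self_le x
    _ = (A *ᵥ x) ⬝ᵥ (A *ᵥ x) := by
        rw [conjTranspose_eq_transpose_of_trivial, ← mulVec_mulVec, dotProduct_mulVec,
          vecMul_transpose]

theorem sigmaMin_pos [Nonempty (Fin n)] (hA : IsUnit A.det) : 0 < sigmaMin A := by
  have hpos : (Aᴴ * A).PosDef :=
    .conjTranspose_mul_self A (mulVec_injective_iff_isUnit.mpr ((isUnit_iff_isUnit_det A).mpr hA))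
  obtain ⟨i, hi⟩ :=
    exists_eq_ciInf_of_finite (f := (isHermitian_conjTranspose_mul_self A).eigenvalues)
  rw [sigmaMin, ← hi]
  exact sqrt_pos.mpr (hpos.eigenvalues_pos i)

theorem abs_inv_mulVec_le (hA : IsUnit A.det) {g : Fin n → ℝ} {c : ℝ} (hg : ∀ i, |g i| ≤ c)
    (j : Fin n) : |(A⁻¹ *ᵥ g) j| ≤ √n * c / sigmaMin A := by
  have : Nonempty (Fin n) := ⟨j⟩
  have hσ := sigmaMin_pos hA
  have hc : 0 ≤ c := (abs_nonneg _).trans (hg j)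
  set y := A⁻¹ *ᵥ g
  have hAy : A *ᵥ y = g := by rw [mulVec_mulVec, mul_nonsing_inv A hA, one_mulVec]
  have hyj : y j ^ 2 ≤ y ⬝ᵥ y := by
    simpa only [dotProduct, ← sq] using
      Finset.single_le_sum (fun i _ => sq_nonneg (y i)) (Finset.mem_univ j)
  have hgg : g ⬝ᵥ g ≤ n * c ^ 2 := by
    simpa only [dotProduct, ← sq, Finset.sum_const, Finset.card_univ, Fintype.card_fin,
      nsmul_eq_mul] using Finset.sum_le_sum fun i (_ : i ∈ Finset.univ) =>
        sq_le_sq' (abs_le.mp (hg i)).1 (abs_le.mp (hg i)).2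
  have hsq : (sigmaMin A * |y j|) ^ 2 ≤ (√n * c) ^ 2 := by
    rw [mul_pow, mul_pow, sq_abs, sq_sqrt n.cast_nonneg]
    calc sigmaMin A ^ 2 * y j ^ 2 ≤ sigmaMin A ^ 2 * (y ⬝ᵥ y) := by gcongr
      _ ≤ g ⬝ᵥ g := hAy ▸ sigmaMin_sq_mul_dotProduct_self_le A y
      _ ≤ n * c ^ 2 := hgg
  rw [le_div_iff₀ hσ, mul_comm]
  exact (sq_le_sq₀ (by positivity) (by positivity)).mp hsq

theorem inv_mulVec_sub_inv_mulVec_le (hA : IsUnit A.det) (h1 : A *ᵥ 1 = 1) {h : Fin n → ℝ}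
    {M : ℝ} (hh : ∀ i, h i ∈ Set.Icc 0 M) (j k : Fin n) :
    (A⁻¹ *ᵥ h) j - (A⁻¹ *ᵥ h) k ≤ √n * M / sigmaMin A := by
  have hinv1 : A⁻¹ *ᵥ 1 = 1 := by
    rw [← h1, mulVec_mulVec, nonsing_inv_mul A hA, one_mulVec, h1]
  set g := h - (M / 2) • 1
  have hg : ∀ i, |g i| ≤ M / 2 := fun i => by
    simp only [g, Pi.sub_apply, Pi.smul_apply, Pi.one_apply, smul_eq_mul, mul_one, abs_le]
    constructor <;> linarith [(hh i).1, (hh i).2]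
  have hshift : A⁻¹ *ᵥ h = A⁻¹ *ᵥ g + (M / 2) • 1 := by
    rw [mulVec_sub, mulVec_smul, hinv1, sub_add_cancel]
  have hj := abs_le.mp (abs_inv_mulVec_le hA hg j)
  have hk := abs_le.mp (abs_inv_mulVec_le hA hg k)
  rw [hshift]
  simp only [Pi.add_apply, Pi.smul_apply, Pi.one_apply, smul_eq_mul, mul_one]
  have hhalf : √n * (M / 2) / sigmaMin A = √n * M / sigmaMin A / 2 := by ring
  linarith [hj.2, hk.1]

end SingularValue

theorem RowStochastic.mulVec_one {n : ℕ} {A : Matrix (Fin n) (Fin n) ℝ} (hA : RowStochastic A) :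
    A *ᵥ 1 = 1 := by
  ext i
  simpa [mulVec, dotProduct] using hA.2 i

theorem RowStochastic.rowEntropy_nonneg {n : ℕ} {A : Matrix (Fin n) (Fin n) ℝ}
    (hA : RowStochastic A) (i : Fin n) : 0 ≤ rowEntropy A i := by
  rw [rowEntropy, neg_nonneg]
  refine Finset.sum_nonpos fun k _ => mul_nonpos_of_nonneg_of_nonpos (hA.1 i k) ?_
  refine logb_nonpos one_lt_two (hA.1 i k) ?_
  exact (hA.2 i).le.trans' (Finset.single_le_sum (fun j _ => hA.1 i j) (Finset.mem_univ k))

theorem rowEntropy_le_Hmax {n : ℕ} (A : Matrix (Fin n) (Fin n) ℝ) (i : Fin n) :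
    rowEntropy A i ≤ Hmax A :=
  le_ciSup (Set.finite_range _).bddAbove i

theorem SDDPos.one_lt_cmin {n : ℕ} [Nontrivial (Fin n)] {A : Matrix (Fin n) (Fin n) ℝ}
    (hA : SDDPos A) : 1 < cmin A := by
  obtain ⟨i, hi⟩ := exists_eq_ciInf_of_finite
    (f := fun i => A i i / ∑ j ∈ Finset.univ.erase i, |A i j|)
  rw [cmin, ← hi]
  simp only [abs_of_pos (hA.1 _ _)]
  obtain ⟨j, hj⟩ := exists_ne i
  have hR : 0 < ∑ j ∈ Finset.univ.erase i, A i j :=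
    Finset.sum_pos' (fun k _ => (hA.1 i k).le) ⟨j, Finset.mem_erase.mpr ⟨hj, mem_univ j⟩, hA.1 i j⟩
  exact (one_lt_div hR).mpr (hA.2 i)

theorem Kmax_sub_Kmin_le {n : ℕ} (hn : 2 ≤ n) (A : Matrix (Fin n) (Fin n) ℝ)
    (hst : RowStochastic A) (hA : SDDPos A) :
    Kmax A - Kmin A ≤ (n : ℝ) * Hmax A * (cmin A / (cmin A - 1)) / sigmaMin A := by
  have : Nontrivial (Fin n) := Fin.nontrivial_iff_two_le.mpr hn
  have hH : ∀ i, rowEntropy A i ∈ Set.Icc 0 (Hmax A) := fun i =>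
    ⟨hst.rowEntropy_nonneg i, rowEntropy_le_Hmax A i⟩
  have hspread : Kmax A - Kmin A ≤ √n * Hmax A / sigmaMin A :=
    ciSup_sub_ciInf_le (Kvec A) (inv_mulVec_sub_inv_mulVec_le hA.isUnit_det hst.mulVec_one hH)
  have hV : 1 ≤ cmin A / (cmin A - 1) := by
    have := hA.one_lt_cmin
    rw [one_le_div (by linarith)]
    linarith
  have hH0 := hH ⟨0, by omega⟩
  have hHmax : 0 ≤ Hmax A := hH0.1.trans hH0.2
  refine hspread.trans (div_le_div_of_nonneg_right ?_ (sigmaMin_pos hA.isUnit_det).le)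
  calc √n * Hmax A ≤ n * Hmax A := by
        gcongr
        exact sqrt_le_self_iff.mpr (.inr (by norm_cast; omega))
    _ = n * Hmax A * 1 := (mul_one _).symm
    _ ≤ n * Hmax A * (cmin A / (cmin A - 1)) := by gcongr
end

section
/- Let n ≥ 2 and let A be an n×n row-stochastic strictly diagonally dominant positive real matrix. Then σ_min(A) ≥ (c_min(A) − n/2)/(c_min(A) + 1). -/
open Matrix Finset Real

/-! Off the diagonal, `2 v_i v_j ≥ -(v_i² + v_j²)`, so `vᵀAv ≥ ∑ᵢ (A_ii - (R_i + C_i) / 2) v_i²`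
where `R_i`, `C_i` are the off-diagonal row and column sums. If `A` is row-stochastic with all
Gershgorin ratios at least `c ≥ 0`, then `R_i ≤ 1/(c+1)`, `A_ii ≥ c/(c+1)`, and every off-diagonal
entry is at most `1/(c+1)`, so `C_i ≤ (n-1)/(c+1)`. Hence `vᵀAv ≥ b ‖v‖²` with
`b = (c - n/2)/(c+1)`; for `b ≥ 0` Cauchy–Schwarz gives `‖Av‖ ≥ b ‖v‖`, and evaluating this on the
unit eigenvectors of `AᵀA` bounds its eigenvalues below by `b²`. -/

section QuadraticForm

variable {ι : Type*} [Fintype ι] [DecidableEq ι]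

theorem sum_erase_sum_erase_comm (f : ι → ι → ℝ) :
    ∑ i, ∑ j ∈ univ.erase i, f i j = ∑ j, ∑ i ∈ univ.erase j, f i j :=
  Finset.sum_comm' fun i j => by simp [ne_comm]

theorem dotProduct_mulVec_eq_diag_add_offDiag (A : Matrix ι ι ℝ) (v : ι → ℝ) :
    v ⬝ᵥ (A *ᵥ v) = ∑ i, (A i i * v i ^ 2 + ∑ j ∈ univ.erase i, A i j * (v i * v j)) := by
  simp only [dotProduct, mulVec, mul_sum]
  refine sum_congr rfl fun i _ => ?_
  rw [← add_sum_erase _ _ (mem_univ i)]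
  congr 1
  · ring
  · exact sum_congr rfl fun j _ => by ring

theorem mul_dotProduct_self_le_dotProduct_mulVec {A : Matrix ι ι ℝ} {d r s : ℝ}
    (hA : ∀ i j, i ≠ j → 0 ≤ A i j) (hd : ∀ i, d ≤ A i i)
    (hr : ∀ i, ∑ j ∈ univ.erase i, A i j ≤ r) (hs : ∀ j, ∑ i ∈ univ.erase j, A i j ≤ s)
    (v : ι → ℝ) :
    (d - (r + s) / 2) * (v ⬝ᵥ v) ≤ v ⬝ᵥ (A *ᵥ v) := by
  have hoff : ∀ i, -∑ j ∈ univ.erase i, A i j * (v i ^ 2 + v j ^ 2) / 2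
      ≤ ∑ j ∈ univ.erase i, A i j * (v i * v j) := by
    intro i
    rw [← sum_neg_distrib]
    refine sum_le_sum fun j hj => ?_
    nlinarith [mul_nonneg (hA i j (ne_of_mem_erase hj).symm) (sq_nonneg (v i + v j))]
  have hsplit : ∑ i, ∑ j ∈ univ.erase i, A i j * (v i ^ 2 + v j ^ 2) / 2
      = ∑ i, (∑ j ∈ univ.erase i, A i j + ∑ j ∈ univ.erase i, A j i) / 2 * v i ^ 2 := by
    simp only [mul_add, add_div, sum_add_distrib]
    rw [sum_erase_sum_erase_comm fun i j => A i j * v j ^ 2 / 2]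
    simp only [add_mul, sum_add_distrib, sum_div, sum_mul]
    congr 1 <;> exact sum_congr rfl fun i _ => sum_congr rfl fun j _ => by ring
  have hcoef : ∀ i, (d - (r + s) / 2) * v i ^ 2
      ≤ (A i i - (∑ j ∈ univ.erase i, A i j + ∑ j ∈ univ.erase i, A j i) / 2) * v i ^ 2 :=
    fun i => mul_le_mul_of_nonneg_right (by linarith [hd i, hr i, hs i]) (sq_nonneg (v i))
  calc (d - (r + s) / 2) * (v ⬝ᵥ v)
      = ∑ i, (d - (r + s) / 2) * v i ^ 2 := by simp only [dotProduct, mul_sum, sq]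
    _ ≤ ∑ i, (A i i - (∑ j ∈ univ.erase i, A i j + ∑ j ∈ univ.erase i, A j i) / 2) * v i ^ 2 :=
      sum_le_sum fun i _ => hcoef i
    _ = ∑ i, A i i * v i ^ 2 - ∑ i, ∑ j ∈ univ.erase i, A i j * (v i ^ 2 + v j ^ 2) / 2 := by
      simp only [hsplit, sub_mul, sum_sub_distrib]
    _ ≤ v ⬝ᵥ (A *ᵥ v) := by
      rw [dotProduct_mulVec_eq_diag_add_offDiag, sum_add_distrib, sub_eq_add_neg, ← sum_neg_distrib]
      exact add_le_add_right (sum_le_sum fun i _ => hoff i) _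

end QuadraticForm

section RowStochastic

variable {n : ℕ} {A : Matrix (Fin n) (Fin n) ℝ}

theorem cmin_nonneg (hA : ∀ i j, 0 ≤ A i j) : 0 ≤ cmin A :=
  Real.iInf_nonneg fun i => div_nonneg (hA i i) (sum_nonneg fun _ _ => abs_nonneg _)

-- On a row with zero off-diagonal part the ratio in `cmin` is the junk value `A i i / 0 = 0`.
theorem cmin_mul_sum_erase_le (hA : ∀ i j, 0 ≤ A i j) (i : Fin n) :
    cmin A * ∑ j ∈ univ.erase i, A i j ≤ A i i := by
  have hR : ∑ j ∈ univ.erase i, |A i j| = ∑ j ∈ univ.erase i, A i j :=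
    sum_congr rfl fun j _ => abs_of_nonneg (hA i j)
  have hle : cmin A ≤ A i i / ∑ j ∈ univ.erase i, A i j :=
    hR ▸ ciInf_le (Set.finite_range _).bddBelow i
  rcases (sum_nonneg fun j _ => hA i j : 0 ≤ ∑ j ∈ univ.erase i, A i j).eq_or_lt with h0 | hpos
  · rw [← h0, mul_zero]
    exact hA i i
  · exact (le_div_iff₀ hpos).1 hle

variable (hst : RowStochastic A) {c : ℝ} (hc : 0 ≤ c)
  (hcA : ∀ i, c * ∑ j ∈ univ.erase i, A i j ≤ A i i)
include hst hc hcA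

theorem RowStochastic.sum_erase_le (i : Fin n) :
    ∑ j ∈ univ.erase i, A i j ≤ 1 / (c + 1) := by
  have hrow : ∑ j ∈ univ.erase i, A i j = 1 - A i i := by
    rw [sum_erase_eq_sub (mem_univ i), hst.2 i]
  rw [le_div_iff₀ (by linarith)]
  nlinarith [hcA i]

theorem RowStochastic.le_diag (i : Fin n) : c / (c + 1) ≤ A i i := by
  have hrow : A i i + ∑ j ∈ univ.erase i, A i j = 1 := by
    rw [add_sum_erase _ _ (mem_univ i), hst.2 i]
  have : c / (c + 1) = 1 - 1 / (c + 1) := by field_simp; ring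
  linarith [hst.sum_erase_le hc hcA i]

theorem RowStochastic.sum_erase_col_le (j : Fin n) :
    ∑ i ∈ univ.erase j, A i j ≤ (n - 1) / (c + 1) := by
  have hentry : ∀ i ∈ univ.erase j, A i j ≤ 1 / (c + 1) := fun i hi =>
    (single_le_sum (fun k _ => hst.1 i k)
      (mem_erase.2 ⟨(ne_of_mem_erase hi).symm, mem_univ j⟩)).trans (hst.sum_erase_le hc hcA i)
  calc ∑ i ∈ univ.erase j, A i j ≤ ∑ i ∈ univ.erase j, 1 / (c + 1) := sum_le_sum hentry
    _ = (n - 1) / (c + 1) := by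
      rw [sum_const, card_erase_of_mem (mem_univ j), card_univ, Fintype.card_fin, nsmul_eq_mul,
        Nat.cast_pred (Fin.pos j)]
      ring

theorem RowStochastic.mul_dotProduct_self_le (v : Fin n → ℝ) :
    (c - n / 2) / (c + 1) * (v ⬝ᵥ v) ≤ v ⬝ᵥ (A *ᵥ v) := by
  have hcoef : (c - n / 2) / (c + 1) = c / (c + 1) - (1 / (c + 1) + (n - 1) / (c + 1)) / 2 := by
    field_simp; ring
  rw [hcoef]
  exact mul_dotProduct_self_le_dotProduct_mulVec (fun i j _ => hst.1 i j) (hst.le_diag hc hcA)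
    (hst.sum_erase_le hc hcA) (hst.sum_erase_col_le hc hcA) v

end RowStochastic

section SingularValues

variable {ι : Type*} [Fintype ι]

theorem sq_le_dotProduct_mulVec_self {A : Matrix ι ι ℝ} {u : ι → ℝ} {b : ℝ} (hu : u ⬝ᵥ u = 1)
    (hb : 0 ≤ b) (h : b ≤ u ⬝ᵥ (A *ᵥ u)) : b ^ 2 ≤ (A *ᵥ u) ⬝ᵥ (A *ᵥ u) := by
  have hcs : (u ⬝ᵥ (A *ᵥ u)) ^ 2 ≤ (u ⬝ᵥ u) * ((A *ᵥ u) ⬝ᵥ (A *ᵥ u)) := by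
    simpa only [dotProduct, sq] using sum_mul_sq_le_sq_mul_sq univ u (A *ᵥ u)
  rw [hu, one_mul] at hcs
  exact (pow_le_pow_left₀ hb h 2).trans hcs

theorem EuclideanSpace.dotProduct_self_eq_one {x : EuclideanSpace ℝ ι} (hx : ‖x‖ = 1) :
    ⇑x ⬝ᵥ ⇑x = 1 := by
  have h := real_inner_self_eq_norm_sq x
  rwa [hx, one_pow, EuclideanSpace.inner_eq_star_dotProduct, star_trivial] at h

variable [DecidableEq ι]

theorem eigenvalues_conjTranspose_mul_self_eq (A : Matrix ι ι ℝ) (i : ι) :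
    (isHermitian_conjTranspose_mul_self A).eigenvalues i =
      (A *ᵥ (isHermitian_conjTranspose_mul_self A).eigenvectorBasis i) ⬝ᵥ
        (A *ᵥ (isHermitian_conjTranspose_mul_self A).eigenvectorBasis i) := by
  rw [IsHermitian.eigenvalues_eq]
  simp only [conjTranspose_eq_transpose_of_trivial, ← mulVec_mulVec, dotProduct_mulVec,
    vecMul_transpose, star_trivial, RCLike.re_to_real]

theorem le_sigmaMin {n : ℕ} [NeZero n] {A : Matrix (Fin n) (Fin n) ℝ} {b : ℝ} (hb : 0 ≤ b)
    (hA : ∀ v, b * (v ⬝ᵥ v) ≤ v ⬝ᵥ (A *ᵥ v)) : b ≤ sigmaMin A := by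
  refine Real.le_sqrt_of_sq_le (le_ciInf fun i => ?_)
  set u := (isHermitian_conjTranspose_mul_self A).eigenvectorBasis i
  have hu : ⇑u ⬝ᵥ ⇑u = 1 := EuclideanSpace.dotProduct_self_eq_one
    ((isHermitian_conjTranspose_mul_self A).eigenvectorBasis.orthonormal.1 i)
  rw [eigenvalues_conjTranspose_mul_self_eq]
  refine sq_le_dotProduct_mulVec_self hu hb ?_
  simpa only [hu, mul_one] using hA u

end SingularValues

theorem sigma_min_lower_bound_general {n : ℕ} (A : Matrix (Fin n) (Fin n) ℝ)
    (hst : RowStochastic A) :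
    (cmin A - (n : ℝ) / 2) / (cmin A + 1) ≤ sigmaMin A := by
  rcases le_or_gt ((cmin A - n / 2) / (cmin A + 1)) 0 with hb | hb
  · exact hb.trans (Real.sqrt_nonneg _)
  obtain rfl | hn := n.eq_zero_or_pos
  · simp [cmin] at hb
  have : NeZero n := ⟨hn.ne'⟩
  exact le_sigmaMin hb.le
    (hst.mul_dotProduct_self_le (cmin_nonneg hst.1) (cmin_mul_sum_erase_le hst.1))

theorem sigma_min_lower_bound {n : ℕ} (hn : 2 ≤ n) (A : Matrix (Fin n) (Fin n) ℝ)
    (hst : RowStochastic A) (hA : SDDPos A) :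
    (cmin A - (n : ℝ) / 2) / (cmin A + 1) ≤ sigmaMin A :=
  sigma_min_lower_bound_general A hst
end

section
/- Let n ≥ 2 and let A be an n×n row-stochastic strictly diagonally dominant positive real matrix with c_min(A) ≥ n − 1. Then the maximum row entropy satisfies H_max(A) ≤ log₂(c_min(A)+1) + (log₂(n−1) − c_min(A)·log₂ c_min(A))/(c_min(A)+1). -/
open Matrix Finset Real

/-!
Write `c = cmin A`, `m = n - 1` and `a = A i i`. Since row `i` sums to `1` and its off-diagonal
mass `1 - a` is at most `a / c`, we get `a ≥ c / (c + 1)`. Gibbs' inequality against the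
distribution putting mass `c / (c + 1)` on `i` and `1 / ((c + 1) m)` on every other index gives
`H(A_i) ≤ log (c + 1) - a log c + (1 - a) log m`, which decreases in `a` because `c, m ≥ 1`;
its value at `a = c / (c + 1)` is the claimed bound.
-/

theorem mul_log_sub_mul_log_le {p q : ℝ} (hp : 0 ≤ p) (hq : 0 < q) :
    p * Real.log q - p * Real.log p ≤ q - p := by
  rcases hp.eq_or_lt with rfl | hp
  · simpa using hq.le
  calc p * Real.log q - p * Real.log p = p * Real.log (q / p) := by
        rw [Real.log_div hq.ne' hp.ne']; ring
    _ ≤ p * (q / p - 1) := by gcongr; exact Real.log_le_sub_one_of_pos (by positivity)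
    _ = q - p := by field_simp

theorem sum_mul_logb_le_sum_mul_logb {ι : Type*} [Fintype ι] {b : ℝ} (hb : 1 < b)
    {p q : ι → ℝ} (hp : ∀ k, 0 ≤ p k) (hq : ∀ k, 0 < q k) (hpq : ∑ k, q k ≤ ∑ k, p k) :
    ∑ k, p k * Real.logb b (q k) ≤ ∑ k, p k * Real.logb b (p k) := by
  have hlog : ∑ k, (p k * Real.log (q k) - p k * Real.log (p k)) ≤ 0 :=
    calc _ ≤ ∑ k, (q k - p k) :=
          Finset.sum_le_sum fun k _ => mul_log_sub_mul_log_le (hp k) (hq k)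
      _ ≤ 0 := by rw [Finset.sum_sub_distrib]; linarith
  simp only [Real.logb, mul_div_assoc', ← Finset.sum_div]
  rw [Finset.sum_sub_distrib] at hlog
  exact div_le_div_of_nonneg_right (by linarith) (Real.log_pos hb).le

theorem neg_sum_mul_logb_le_of_sum_eq_one {ι : Type*} [Fintype ι] [DecidableEq ι] {b : ℝ}
    (hb : 1 < b) (hι : 1 < Fintype.card ι) {p : ι → ℝ} (hp : ∀ k, 0 ≤ p k)
    (hp1 : ∑ k, p k = 1) (i : ι) {c : ℝ} (hc : 0 < c) :
    -∑ k, p k * Real.logb b (p k) ≤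
      Real.logb b (c + 1) - p i * Real.logb b c +
        (1 - p i) * Real.logb b (Fintype.card ι - 1) := by
  set m : ℝ := Fintype.card ι - 1
  have hm : 0 < m := by
    have : (1 : ℝ) < Fintype.card ι := by exact_mod_cast hι
    simp only [m]; linarith
  have hcard : ((Finset.univ.erase i).card : ℝ) = m := by
    rw [Finset.card_erase_of_mem (Finset.mem_univ i), Finset.card_univ, Nat.cast_pred (by omega)]
  set q : ι → ℝ := fun k => if k = i then c / (c + 1) else 1 / ((c + 1) * m)
  have hq : ∀ k, 0 < q k := fun k => by simp only [q]; split <;> positivity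
  have hq1 : ∑ k, q k = 1 := by
    rw [← Finset.add_sum_erase _ _ (Finset.mem_univ i),
      Finset.sum_congr rfl fun k hk => if_neg (Finset.ne_of_mem_erase hk)]
    simp only [q, if_pos, Finset.sum_const, nsmul_eq_mul, hcard]
    field_simp
  have hpi : ∑ k ∈ Finset.univ.erase i, p k = 1 - p i := by
    rw [← hp1, ← Finset.add_sum_erase _ _ (Finset.mem_univ i)]; ring
  have hcross : ∑ k, p k * Real.logb b (q k) =
      p i * Real.logb b (c / (c + 1)) + (1 - p i) * Real.logb b (1 / ((c + 1) * m)) := by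
    rw [← Finset.add_sum_erase _ _ (Finset.mem_univ i),
      Finset.sum_congr rfl fun k hk => by
        rw [show q k = _ from if_neg (Finset.ne_of_mem_erase hk)],
      ← Finset.sum_mul, hpi]
    simp only [q, if_pos]
  have hgibbs := sum_mul_logb_le_sum_mul_logb hb hp hq (by rw [hq1, hp1])
  rw [hcross, Real.logb_div hc.ne' (by positivity), one_div, Real.logb_inv,
    Real.logb_mul (by positivity) hm.ne'] at hgibbs
  linarith

theorem RowStochastic.cmin_div_add_one_le {n : ℕ} {A : Matrix (Fin n) (Fin n) ℝ}
    (hA : RowStochastic A) (hc : 0 < cmin A) (i : Fin n) :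
    cmin A / (cmin A + 1) ≤ A i i := by
  set s := ∑ j ∈ Finset.univ.erase i, |A i j|
  have hci : cmin A ≤ A i i / s :=
    ciInf_le (Finite.bddBelow_range fun i => A i i / ∑ j ∈ Finset.univ.erase i, |A i j|) i
  have hs : A i i + s = 1 := by
    rw [← hA.2 i, ← Finset.add_sum_erase _ _ (Finset.mem_univ i)]
    simp only [s, abs_of_nonneg (hA.1 i _)]
  -- `A i i / 0 = 0` would contradict `0 < cmin A`
  have hs0 : 0 < s := by
    by_contra! h
    rw [le_antisymm h (Finset.sum_nonneg fun j _ => abs_nonneg (A i j)), div_zero] at hci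
    linarith
  rw [le_div_iff₀ hs0] at hci
  rw [div_le_iff₀ (by linarith)]
  nlinarith

theorem logb_succ_sub_mul_logb_add_mul_logb_le {a b c m : ℝ} (hb : 1 < b) (hc : 1 ≤ c)
    (hm : 1 ≤ m) (ha : c / (c + 1) ≤ a) :
    Real.logb b (c + 1) - a * Real.logb b c + (1 - a) * Real.logb b m ≤
      Real.logb b (c + 1) + (Real.logb b m - c * Real.logb b c) / (c + 1) := by
  have hc' : 0 ≤ Real.logb b c := Real.logb_nonneg hb hc
  have hm' : 0 ≤ Real.logb b m := Real.logb_nonneg hb hm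
  have hright : (Real.logb b m - c * Real.logb b c) / (c + 1) =
      -(c / (c + 1)) * Real.logb b c + (1 - c / (c + 1)) * Real.logb b m := by
    field_simp; ring
  rw [hright]
  nlinarith

theorem Hmax_upper_bound_general {n : ℕ} (hn : 2 ≤ n) (A : Matrix (Fin n) (Fin n) ℝ)
    (hst : RowStochastic A) (hc : (n : ℝ) - 1 ≤ cmin A) :
    Hmax A ≤ Real.logb 2 (cmin A + 1) +
      (Real.logb 2 ((n : ℝ) - 1) - cmin A * Real.logb 2 (cmin A)) / (cmin A + 1) := by
  have hn1 : (1 : ℝ) ≤ n - 1 := by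
    have : (2 : ℝ) ≤ n := by exact_mod_cast hn
    linarith
  have : Nonempty (Fin n) := ⟨⟨0, by omega⟩⟩
  refine ciSup_le fun i => ?_
  have hentropy := neg_sum_mul_logb_le_of_sum_eq_one (c := cmin A) one_lt_two
    (by rw [Fintype.card_fin]; omega) (hst.1 i) (hst.2 i) i (by linarith)
  rw [Fintype.card_fin] at hentropy
  exact hentropy.trans <| logb_succ_sub_mul_logb_add_mul_logb_le one_lt_two (hn1.trans hc) hn1 <|
    hst.cmin_div_add_one_le (by linarith) i

theorem Hmax_upper_bound {n : ℕ} (hn : 2 ≤ n) (A : Matrix (Fin n) (Fin n) ℝ)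
    (hst : RowStochastic A) (hA : SDDPos A) (hc : (n : ℝ) - 1 ≤ cmin A) :
    Hmax A ≤ Real.logb 2 (cmin A + 1) +
      (Real.logb 2 ((n : ℝ) - 1) - cmin A * Real.logb 2 (cmin A)) / (cmin A + 1) :=
  Hmax_upper_bound_general hn A hst hc
end
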